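/- Let n ≥ 1 be an integer and let x ∈ ℝ^{2n} be a nonzero vector. Define the polynomials f_o(ξ) = Σ_{i=1}^n x_{2i−1}·He_{2i}(ξ) and f_e(ξ) = Σ_{i=1}^n x_{2i}·He_{2i−2}(ξ). Then ∫_{-∞}^0 ξ·(f_e(ξ)² + f_o(ξ)²)·e^{-ξ²/2} dξ + (∫_{-∞}^0 ξ·f_o(ξ)·e^{-ξ²/2} dξ)² < 0. Equivalently, the symmetric matrix T^b ∈ ℝ^{2n×2n} with entries t^b_{2k,2l} = S(2k−2, 2l−2) and t^b_{2k−1,2l−1} = S(2k, 2l) − S(2k,0)·S(0,2l)/S(0,0) (all other entries zero) is negative definite. -/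

import Mathlib

open MeasureTheory Real Matrix

/-- The probabilist's Hermite polynomial evaluated at a real number. -/
noncomputable def He (n : ℕ) (x : ℝ) : ℝ := Polynomial.aeval x (Polynomial.hermite n)

/-- The half-space Hermite-Gaussian integral `S(α,β)`. -/
noncomputable def S (a b : ℕ) : ℝ :=
  ∫ x in Set.Iic (0 : ℝ), x * He a x * He b x * Real.exp (-x ^ 2 / 2)

/-- The boundary matrix `T^b` of the temperature jump problem: in one-based
indexing, `t^b_{2k,2l} = S(2k-2,2l-2)` and
`t^b_{2k-1,2l-1} = S(2k,2l) - S(2k,0)·S(0,2l)/S(0,0)`, other entries zero.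
Here indices are zero-based, so one-based `2k` corresponds to odd `i`
with `2k-2 = i-1`, and one-based `2k-1` to even `i` with `2k = i+2`. -/
noncomputable def Tb (n : ℕ) : Matrix (Fin (2 * n)) (Fin (2 * n)) ℝ :=
  Matrix.of fun i j =>
    if i.val % 2 = 1 ∧ j.val % 2 = 1 then S (i.val - 1) (j.val - 1)
    else if i.val % 2 = 0 ∧ j.val % 2 = 0 then
      S (i.val + 2) (j.val + 2) - S (i.val + 2) 0 * S 0 (j.val + 2) / S 0 0
    else 0

/-!
For real polynomials put `⟨p, q⟩ = ∫_{-∞}^0 t p(t) q(t) e^{-t²/2} dt`, so that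
`S a b = ⟨He_a, He_b⟩`. The form is negative definite: `t p(t)² e^{-t²/2}` is `≤ 0` on `(-∞, 0]`
and `< 0` away from the finitely many roots of `p`. With `G = ∑ x_{2i+1} He_{2i}` and
`H = ∑ x_{2i} He_{2i+2}`, both quantities of the theorem equal `⟨G, G⟩ + ⟨H, H⟩ + ⟨H, 1⟩²`.
Since `⟨1, 1⟩ = S(0,0) = -1`, the last two terms are `⟨H + c, H + c⟩` with `c = ⟨H, 1⟩`, so the
sum is negative unless `G = 0` and `H + c = 0`, and linear independence of the Hermite polynomials
turns that into `x = 0`.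
-/

open Polynomial Set Filter Topology

noncomputable def hermiteReal (n : ℕ) : ℝ[X] := (hermite n).map (Int.castRingHom ℝ)

lemma He_eq_eval (n : ℕ) (t : ℝ) : He n t = (hermiteReal n).eval t := by
  simp [He, hermiteReal, aeval_def, eval_map]

lemma hermiteReal_zero : hermiteReal 0 = 1 := by simp [hermiteReal]

lemma degree_hermiteReal (n : ℕ) : (hermiteReal n).degree = n := by
  rw [hermiteReal, (hermite_monic n).degree_map, degree_hermite]

lemma linearIndependent_hermiteReal : LinearIndependent ℝ hermiteReal :=
  Sequence.linearIndependent ⟨hermiteReal, degree_hermiteReal⟩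

lemma integrable_eval_mul_exp_neg_sq_div_two (p : ℝ[X]) :
    Integrable (fun t => p.eval t * exp (-t ^ 2 / 2)) := by
  induction p using Polynomial.induction_on' with
  | add p q hp hq =>
    simp only [eval_add, add_mul]
    exact hp.add hq
  | monomial k a =>
    have h := integrable_rpow_mul_exp_neg_mul_sq (b := 1 / 2) (by norm_num) (s := k)
      (neg_one_lt_zero.trans_le k.cast_nonneg)
    simp only [rpow_natCast] at h
    convert h.const_mul a using 2 with t
    simp only [eval_monomial]
    ring_nf

lemma integrableOn_mul_eval_mul_eval (p q : ℝ[X]) :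
    IntegrableOn (fun t => t * p.eval t * q.eval t * exp (-t ^ 2 / 2)) (Iic 0) := by
  have h := (integrable_eval_mul_exp_neg_sq_div_two (X * p * q)).integrableOn (s := Iic 0)
  simpa only [eval_mul, eval_X] using h

noncomputable def halfGaussForm : LinearMap.BilinForm ℝ ℝ[X] :=
  LinearMap.mk₂ ℝ (fun p q => ∫ t in Iic (0 : ℝ), t * p.eval t * q.eval t * exp (-t ^ 2 / 2))
    (fun p₁ p₂ q => by
      simp only [eval_add, mul_add, add_mul]
      exact integral_add (integrableOn_mul_eval_mul_eval p₁ q)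
        (integrableOn_mul_eval_mul_eval p₂ q))
    (fun c p q => by
      simp only [eval_smul, smul_eq_mul, ← integral_const_mul]
      congr 1 with t; ring)
    (fun p q₁ q₂ => by
      simp only [eval_add, mul_add, add_mul]
      exact integral_add (integrableOn_mul_eval_mul_eval p q₁)
        (integrableOn_mul_eval_mul_eval p q₂))
    (fun c p q => by
      simp only [eval_smul, smul_eq_mul, ← integral_const_mul]
      congr 1 with t; ring)

lemma halfGaussForm_apply (p q : ℝ[X]) :
    halfGaussForm p q = ∫ t in Iic (0 : ℝ), t * p.eval t * q.eval t * exp (-t ^ 2 / 2) := rfl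

lemma halfGaussForm_comm (p q : ℝ[X]) : halfGaussForm p q = halfGaussForm q p := by
  simp only [halfGaussForm_apply, mul_right_comm _ (p.eval _)]

lemma halfGaussForm_hermiteReal (a b : ℕ) :
    halfGaussForm (hermiteReal a) (hermiteReal b) = S a b := by
  simp only [halfGaussForm_apply, S, He_eq_eval]

lemma halfGaussForm_one_one : halfGaussForm 1 1 = -1 := by
  have hderiv : ∀ t ∈ Iic (0 : ℝ),
      HasDerivAt (fun s => -exp (-s ^ 2 / 2)) (t * exp (-t ^ 2 / 2)) t := by
    intro t _
    have h := ((hasDerivAt_pow 2 t).fun_neg.div_const 2).exp.fun_neg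
    exact h.congr_deriv (by norm_num; ring)
  have hlim : Tendsto (fun s : ℝ => -exp (-s ^ 2 / 2)) atBot (𝓝 0) := by
    have hsq : Tendsto (fun s : ℝ => s ^ 2 / 2) atBot atTop := by
      have := (tendsto_pow_atTop (α := ℝ) two_ne_zero).comp tendsto_neg_atBot_atTop
      exact (this.congr fun s => by simp).atTop_div_const two_pos
    simpa [neg_div] using (tendsto_exp_neg_atTop_nhds_zero.comp hsq).neg
  have hint : IntegrableOn (fun t : ℝ => t * exp (-t ^ 2 / 2)) (Iic 0) := by
    simpa using integrableOn_mul_eval_mul_eval 1 1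
  simp only [halfGaussForm_apply, eval_one, mul_one]
  rw [integral_Iic_of_hasDerivAt_of_tendsto' hderiv hint hlim]
  simp

lemma mul_eval_mul_eval_mul_exp_nonpos (p : ℝ[X]) {t : ℝ} (ht : t ≤ 0) :
    t * p.eval t * p.eval t * exp (-t ^ 2 / 2) ≤ 0 := by
  rw [mul_assoc t]
  exact mul_nonpos_of_nonpos_of_nonneg (mul_nonpos_of_nonpos_of_nonneg ht (mul_self_nonneg _))
    (exp_pos _).le

lemma halfGaussForm_self_nonpos (p : ℝ[X]) : halfGaussForm p p ≤ 0 :=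
  setIntegral_nonpos measurableSet_Iic fun _ ht => mul_eval_mul_eval_mul_exp_nonpos p ht

lemma halfGaussForm_self_neg {p : ℝ[X]} (hp : p ≠ 0) : halfGaussForm p p < 0 := by
  obtain ⟨t₀, ht₀, hroot⟩ : ∃ t₀ < (0 : ℝ), ¬ p.IsRoot t₀ := by
    by_contra! h
    exact Set.Iio_infinite (0 : ℝ) ((p.finite_setOfPred_isRoot hp).subset h)
  set f : ℝ → ℝ := fun t => -(t * p.eval t * p.eval t * exp (-t ^ 2 / 2))
  have hf_cont : Continuous f := by fun_prop
  have hf_t₀ : f t₀ ≠ 0 := by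
    have : p.eval t₀ ≠ 0 := hroot
    simp [f, ht₀.ne, this, (exp_pos _).ne']
  have hpos : 0 < ∫ t in Iic (0 : ℝ), f t := by
    have hf_int : IntegrableOn f (Iic 0) := (integrableOn_mul_eval_mul_eval p p).neg
    rw [setIntegral_pos_iff_support_of_nonneg_ae _ hf_int]
    · have hU : IsOpen (Function.support f ∩ Iio 0) := hf_cont.isOpen_support.inter isOpen_Iio
      exact (hU.measure_pos _ ⟨t₀, hf_t₀, ht₀⟩).trans_le
        (measure_mono (inter_subset_inter_right _ Iio_subset_Iic_self))
    · filter_upwards [ae_restrict_mem measurableSet_Iic] with t ht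
      exact neg_nonneg.2 (mul_eval_mul_eval_mul_exp_nonpos p ht)
  rw [integral_neg] at hpos
  exact neg_pos.1 hpos

lemma halfGaussForm_add_smul_one_self (p : ℝ[X]) :
    halfGaussForm (p + halfGaussForm p 1 • 1) (p + halfGaussForm p 1 • 1) =
      halfGaussForm p p + halfGaussForm p 1 ^ 2 := by
  simp only [map_add, map_smul, LinearMap.add_apply, LinearMap.smul_apply, smul_eq_mul,
    halfGaussForm_one_one, halfGaussForm_comm 1 p]
  ring

lemma halfGaussForm_self_add_neg {p q : ℝ[X]} (h : p ≠ 0 ∨ q + halfGaussForm q 1 • 1 ≠ 0) :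
    halfGaussForm p p + (halfGaussForm q q + halfGaussForm q 1 ^ 2) < 0 := by
  rw [← halfGaussForm_add_smul_one_self]
  rcases h with hp | hq
  · linarith [halfGaussForm_self_neg hp, halfGaussForm_self_nonpos (q + halfGaussForm q 1 • 1)]
  · linarith [halfGaussForm_self_nonpos p, halfGaussForm_self_neg hq]

noncomputable def hermiteComb {m : ℕ} (c : Fin m → ℝ) (d : Fin m → ℕ) : ℝ[X] :=
  ∑ i, c i • hermiteReal (d i)

lemma eval_hermiteComb {m : ℕ} (c : Fin m → ℝ) (d : Fin m → ℕ) (t : ℝ) :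
    (hermiteComb c d).eval t = ∑ i, c i * He (d i) t := by
  simp [hermiteComb, eval_finsetSum, He_eq_eval]

lemma halfGaussForm_hermiteComb {m m' : ℕ} (c : Fin m → ℝ) (d : Fin m → ℕ) (c' : Fin m' → ℝ)
    (d' : Fin m' → ℕ) :
    halfGaussForm (hermiteComb c d) (hermiteComb c' d') =
      ∑ i, ∑ j, c i * c' j * S (d i) (d' j) := by
  simp only [hermiteComb, map_sum, map_smul, LinearMap.sum_apply, LinearMap.smul_apply, smul_eq_mul,
    halfGaussForm_hermiteReal, Finset.mul_sum]
  rw [Finset.sum_comm]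
  exact Finset.sum_congr rfl fun _ _ => Finset.sum_congr rfl fun _ _ => by ring

lemma halfGaussForm_hermiteComb_one {m : ℕ} (c : Fin m → ℝ) (d : Fin m → ℕ) :
    halfGaussForm (hermiteComb c d) 1 = ∑ i, c i * S (d i) 0 := by
  simp only [hermiteComb, map_sum, map_smul, LinearMap.sum_apply, LinearMap.smul_apply, smul_eq_mul,
    ← hermiteReal_zero, halfGaussForm_hermiteReal]

lemma hermiteComb_two_mul_eq_zero {m : ℕ} {c : Fin m → ℝ}
    (h : hermiteComb c (fun i => 2 * i) = 0) : c = 0 :=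
  funext <| Fintype.linearIndependent_iff.1
    (linearIndependent_hermiteReal.comp _ fun i j hij => Fin.ext (by simpa using hij)) c h

lemma hermiteComb_two_mul_succ_add_smul_one_eq_zero {m : ℕ} {c : Fin m → ℝ} {a : ℝ}
    (h : hermiteComb c (fun i => 2 * (i + 1)) + a • 1 = 0) : c = 0 := by
  have h' : hermiteComb (Fin.cons a c : Fin (m + 1) → ℝ) (fun i => 2 * i) = 0 := by
    rw [← h, hermiteComb, Fin.sum_univ_succ, add_comm]
    simp [hermiteComb, hermiteReal_zero]
  funext i
  simpa using congrFun (hermiteComb_two_mul_eq_zero h') i.succ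

lemma S_comm (a b : ℕ) : S a b = S b a := by
  rw [← halfGaussForm_hermiteReal, halfGaussForm_comm, halfGaussForm_hermiteReal]

lemma S_zero_zero : S 0 0 = -1 := by
  rw [← halfGaussForm_hermiteReal, hermiteReal_zero, halfGaussForm_one_one]

def finEvenOddEquiv (n : ℕ) : Fin n ⊕ Fin n ≃ Fin (2 * n) where
  toFun := Sum.elim (fun i => ⟨2 * i, by omega⟩) (fun i => ⟨2 * i + 1, by omega⟩)
  invFun k := if k.val % 2 = 0 then .inl ⟨k / 2, by omega⟩ else .inr ⟨k / 2, by omega⟩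
  left_inv := by rintro (i | i) <;> simp [Fin.ext_iff]; omega
  right_inv k := by by_cases h : k.val % 2 = 0 <;> simp [h] <;> ext <;> simp <;> omega

section Tb

variable {n : ℕ} (a b : Fin n)

local notation "e" => finEvenOddEquiv n

lemma Tb_inl_inl : Tb n (e (.inl a)) (e (.inl b)) =
    S (2 * (a + 1)) (2 * (b + 1)) + S (2 * (a + 1)) 0 * S (2 * (b + 1)) 0 := by
  simp [finEvenOddEquiv, Tb, S_zero_zero, S_comm 0]
  ring_nf

lemma Tb_inr_inr : Tb n (e (.inr a)) (e (.inr b)) = S (2 * a) (2 * b) := by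
  simp [finEvenOddEquiv, Tb]

lemma Tb_inl_inr : Tb n (e (.inl a)) (e (.inr b)) = 0 := by
  simp [finEvenOddEquiv, Tb]

lemma Tb_inr_inl : Tb n (e (.inr a)) (e (.inl b)) = 0 := by
  simp [finEvenOddEquiv, Tb]

lemma dotProduct_Tb_mulVec (x : Fin (2 * n) → ℝ) :
    x ⬝ᵥ Tb n *ᵥ x =
      halfGaussForm (hermiteComb (fun i => x (e (.inr i))) (fun i => 2 * i))
          (hermiteComb (fun i => x (e (.inr i))) (fun i => 2 * i)) +
        (halfGaussForm (hermiteComb (fun i => x (e (.inl i))) (fun i => 2 * (i + 1)))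
            (hermiteComb (fun i => x (e (.inl i))) (fun i => 2 * (i + 1))) +
          halfGaussForm (hermiteComb (fun i => x (e (.inl i))) (fun i => 2 * (i + 1))) 1 ^ 2) := by
  simp only [halfGaussForm_hermiteComb, halfGaussForm_hermiteComb_one, sq, dotProduct, mulVec,
    Finset.mul_sum]
  rw [← (finEvenOddEquiv n).sum_comp]
  simp only [← (finEvenOddEquiv n).sum_comp (fun j => _ * (Tb n _ j * x j))]
  simp only [Fintype.sum_sum_type, Tb_inl_inl, Tb_inr_inr, Tb_inl_inr, Tb_inr_inl, zero_mul,
    mul_zero, add_zero, zero_add, Finset.sum_mul, ← Finset.sum_add_distrib]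
  exact Finset.sum_congr rfl fun _ _ => Finset.sum_congr rfl fun _ _ => by ring

end Tb

lemma setIntegral_sq_add_sq_eq {m m' : ℕ} (c : Fin m → ℝ) (d : Fin m → ℕ) (c' : Fin m' → ℝ)
    (d' : Fin m' → ℕ) :
    ∫ ξ in Iic (0 : ℝ),
        ξ * ((∑ i, c i * He (d i) ξ) ^ 2 + (∑ i, c' i * He (d' i) ξ) ^ 2) * exp (-ξ ^ 2 / 2) =
      halfGaussForm (hermiteComb c d) (hermiteComb c d) +
        halfGaussForm (hermiteComb c' d') (hermiteComb c' d') := by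
  rw [halfGaussForm_apply, halfGaussForm_apply, ← integral_add (integrableOn_mul_eval_mul_eval _ _)
    (integrableOn_mul_eval_mul_eval _ _)]
  congr 1 with ξ
  simp only [eval_hermiteComb]
  ring

lemma setIntegral_mul_sum_eq {m : ℕ} (c : Fin m → ℝ) (d : Fin m → ℕ) :
    ∫ ξ in Iic (0 : ℝ), ξ * (∑ i, c i * He (d i) ξ) * exp (-ξ ^ 2 / 2) =
      halfGaussForm (hermiteComb c d) 1 := by
  simp only [halfGaussForm_apply, eval_hermiteComb, eval_one, mul_one]

theorem Tb_negdef (n : ℕ) (x : Fin (2 * n) → ℝ) (hx : x ≠ 0) :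
    ((∫ ξ in Set.Iic (0 : ℝ),
        ξ * ((∑ i : Fin n, x ⟨2 * i.val + 1, by have := i.isLt; omega⟩ * He (2 * i.val) ξ) ^ 2 +
             (∑ i : Fin n, x ⟨2 * i.val, by have := i.isLt; omega⟩ * He (2 * (i.val + 1)) ξ) ^ 2) *
          Real.exp (-ξ ^ 2 / 2)) +
      (∫ ξ in Set.Iic (0 : ℝ),
        ξ * (∑ i : Fin n, x ⟨2 * i.val, by have := i.isLt; omega⟩ * He (2 * (i.val + 1)) ξ) *
          Real.exp (-ξ ^ 2 / 2)) ^ 2 < 0) ∧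
    x ⬝ᵥ (Tb n) *ᵥ x < 0 := by
  set e := finEvenOddEquiv n
  have hcoeff : (fun i => x (e (.inr i))) ≠ 0 ∨ (fun i => x (e (.inl i))) ≠ 0 := by
    by_contra! h
    refine hx (funext fun k => ?_)
    obtain ⟨i | i, rfl⟩ := e.surjective k
    exacts [congrFun h.2 i, congrFun h.1 i]
  have key := halfGaussForm_self_add_neg (hcoeff.imp (mt hermiteComb_two_mul_eq_zero)
    (mt hermiteComb_two_mul_succ_add_smul_one_eq_zero))
  refine ⟨?_, ?_⟩
  · rw [setIntegral_sq_add_sq_eq, setIntegral_mul_sum_eq, add_assoc]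
    exact key
  · rw [dotProduct_Tb_mulVec]
    exact key
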